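/- For every natural number n, there is an order-independent randomized online matroid morphism from the class of binary matroids with at most n elements into the complete binary matroid of rank n. That is, one can assign to every m ≤ n and every binary matroid M on Fin m (with ground set all of Fin m) a finitely supported probability distribution μ_M on maps Fin m → (Fin n → ZMod 2) such that: (i) every map in the support of μ_M is rank-preserving into the complete binary matroid of rank n; (ii) for every k-prefix M' of M, the pushforward of μ_M under restriction to Fin k equals μ_{M'}; and (iii) for every permutation σ of Fin m, writing M^σ for the matroid on Fin m in which a set S is independent iff σ(S) is independent in M, the pushforward of μ_{M^σ} under f ↦ f ∘ σ⁻¹ equals μ_M. -/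

import Mathlib

open Set

/-- The rank of a set in a matroid: the supremum of the cardinalities of its
independent subsets. -/
noncomputable def mRank {α : Type*} (M : Matroid α) (S : Set α) : ℕ∞ :=
  ⨆ I ∈ {I : Set α | M.Indep I ∧ I ⊆ S}, I.encard

/-- The rank of a set of vectors: the dimension of its linear span. -/
noncomputable def spanRank (K : Type*) [Field K] {W : Type*} [AddCommGroup W] [Module K W]
    (S : Set W) : ℕ :=
  Module.finrank K (Submodule.span K S)

/-- A matroid is representable over a field `K` if independence coincides with
`K`-linear independence of an assignment of vectors to the elements. -/
def RepOver (K : Type*) [Field K] {α : Type*} (M : Matroid α) : Prop :=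
  ∃ (ι : Type) (f : α → ι → K), ∀ I : Set α,
    M.Indep I ↔ I ⊆ M.E ∧ LinearIndependent K (fun x : I => f (x : α))

/-- The `k`-prefix of an ordered matroid on `Fin m`: its restriction to the
first `k` elements, viewed as a matroid on `Fin k`. -/
def prefixMatroid {k m : ℕ} (h : k ≤ m) (M : Matroid (Fin m)) : Matroid (Fin k) :=
  M.comap (Fin.castLE h)

/-!
Every binary matroid `M` on `Fin m` with `m ≤ n` has a representation in `𝔽₂ⁿ`, and `μ M` is the
uniform distribution on the set of all of them (these are exactly the rank-preserving maps).
Binary matroids are uniquely representable: over `𝔽₂` every vector is the sum of the vectors of a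
basis `B` lying in its fundamental circuit, and that circuit, `{b ∈ B | x ∉ cl (B - b)}`, is
determined by the matroid. So any two representations differ by an automorphism of `𝔽₂ⁿ`. The
automorphism group thus acts transitively on the representations of each prefix, compatibly with
restriction, so all fibres of the restriction map have the same size and the pushforward of a
uniform distribution is uniform. Relabelling the elements by a permutation is a bijection
between the representations of `M` and of `M.comap σ`, which gives order independence.
-/

open Submodule

lemma mRank_eq_eRk {α : Type*} (M : Matroid α) (S : Set α) : mRank M S = M.eRk S :=
  le_antisymm (iSup₂_le fun _ hI ↦ hI.1.encard_le_eRk_of_subset hI.2)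
    (M.eRk_le_iff.2 fun I hIS hI ↦
      le_iSup₂ (f := fun I (_ : I ∈ {I | M.Indep I ∧ I ⊆ S}) ↦ I.encard) I ⟨hI, hIS⟩)

section LinearAlgebra

variable {ι K V : Type*} [Field K] [AddCommGroup V] [Module K V]

theorem exists_linearEquiv_apply_eq_of_linearIndependent [FiniteDimensional K V] {v w : ι → V}
    (hv : LinearIndependent K v) (hw : LinearIndependent K w) :
    ∃ A : V ≃ₗ[K] V, ∀ i, A (v i) = w i := by
  obtain ⟨A, hA⟩ := Submodule.exists_linearEquiv_restrict_eq
    ((Module.Basis.span hv).equiv (Module.Basis.span hw) (Equiv.refl ι))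
  refine ⟨A, fun i ↦ ?_⟩
  have := hA (Module.Basis.span hv i)
  rw [Module.Basis.equiv_apply, Equiv.refl_apply, Module.Basis.span_apply,
    Module.Basis.span_apply] at this
  exact this.symm

open Classical in
theorem LinearIndepOn.eq_sum_filter_notMem_span {V : Type*} [AddCommGroup V] [Module (ZMod 2) V]
    {v : ι → V} {s : Finset ι} (hs : LinearIndepOn (ZMod 2) v s) {y : V}
    (hy : y ∈ span (ZMod 2) (v '' s)) :
    y = ∑ i ∈ s with y ∉ span (ZMod 2) (v '' (s.erase i)), v i := by
  have h01 : ∀ a : ZMod 2, a = 0 ∨ a = 1 := by decide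
  obtain ⟨c, rfl⟩ := (mem_span_image_finset_iff_exists_fun' (ZMod 2)).1 hy
  have hcoef : ∀ i ∈ s,
      (∑ j ∈ s, c j • v j ∉ span (ZMod 2) (v '' (s.erase i)) ↔ c i = 1) := by
    intro i hi
    have hvi : v i ∉ span (ZMod 2) (v '' (s.erase i)) := by
      refine (hs.mono (Finset.coe_subset.2 (s.erase_subset i))).notMem_span_iff.2
        ⟨?_, by simp⟩
      rwa [Finset.coe_erase, insert_sdiff_singleton, insert_eq_of_mem hi]
    rw [← Finset.add_sum_erase s _ hi, Submodule.add_mem_iff_left _ (sum_mem fun j hj ↦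
      smul_mem _ _ (subset_span (mem_image_of_mem v hj)))]
    rcases h01 (c i) with h | h <;> simp [h, hvi, -Finset.coe_erase]
  rw [Finset.filter_congr hcoef, Finset.sum_filter]
  refine Finset.sum_congr rfl fun i _ ↦ ?_
  rcases h01 (c i) with h | h <;> simp [h]

end LinearAlgebra

theorem linearIndepOn_comp_iff {ι ι' R V : Type*} [Ring R] [Nontrivial R] [AddCommGroup V]
    [Module R V] {v : ι → V} {f : ι' → ι} {s : Set ι'} :
    LinearIndepOn R (v ∘ f) s ↔ LinearIndepOn R v (f '' s) ∧ InjOn f s :=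
  ⟨fun h ↦ ⟨h.image_of_comp f v, h.injOn.of_comp⟩, fun h ↦ h.1.comp_of_image h.2⟩

namespace Matroid

variable {α β K W W' : Type*} [Field K] [AddCommGroup W] [Module K W] [AddCommGroup W']
  [Module K W'] {M : Matroid α} {v : α → W}

def IsRep (M : Matroid α) (K : Type*) [Field K] {W : Type*} [AddCommGroup W] [Module K W]
    (v : α → W) : Prop :=
  ∀ I, M.Indep I ↔ LinearIndepOn K v I

theorem isRep_comp_iff (φ : W →ₗ[K] W') (hφ : Function.Injective φ) :
    M.IsRep K (φ ∘ v) ↔ M.IsRep K v := by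
  simp only [IsRep, φ.linearIndepOn_iff_of_injOn hφ.injOn]

theorem IsRep.comap (hv : M.IsRep K v) (f : β → α) : (M.comap f).IsRep K (v ∘ f) := by
  simp only [IsRep, comap_indep_iff, linearIndepOn_comp_iff, hv _, implies_true]

theorem isRep_comap_equiv_iff (σ : β ≃ α) : (M.comap σ).IsRep K (v ∘ σ) ↔ M.IsRep K v := by
  simp only [IsRep, comap_indep_iff, linearIndepOn_comp_iff, σ.injective.injOn, and_true]
  exact ((Set.image_surjective.2 σ.surjective).forall
    (p := fun I ↦ M.Indep I ↔ LinearIndepOn K v I)).symm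

theorem IsRep.mem_span_image_iff (hv : M.IsRep K v) {I : Set α} (hI : M.Indep I) {x : α} :
    v x ∈ span K (v '' I) ↔ (M.Indep (insert x I) → x ∈ I) := by
  rw [((hv I).1 hI).mem_span_iff, hv]

theorem IsRep.finrank_span_image_eq_eRk (hv : M.IsRep K v) {S : Set α} (hS : S.Finite) :
    (Module.finrank K (span K (v '' S)) : ℕ∞) = M.eRk S := by
  obtain ⟨I, hI⟩ := M.exists_isBasis' S
  have hIv : LinearIndepOn K v I := (hv I).1 hI.indep
  have hspan : span K (v '' I) = span K (v '' S) := by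
    refine le_antisymm (span_mono (image_mono hI.subset)) (span_le.2 ?_)
    rintro _ ⟨x, hxS, rfl⟩
    exact (hv.mem_span_image_iff hI.indep).2 fun hins ↦
      by_contra fun hxI ↦ hI.insert_not_indep ⟨hxS, hxI⟩ hins
  have := FiniteDimensional.span_of_finite K (hS.image v)
  rw [hI.eRk_eq_encard, ← toENat_rank_span_set hIv, hspan, ← Module.finrank_eq_rank,
    Cardinal.toENat_nat]

theorem IsRep.exists_linearEquiv_comp_eq [Finite α] {V : Type*} [AddCommGroup V]
    [Module (ZMod 2) V] [FiniteDimensional (ZMod 2) V] {v w : α → V}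
    (hv : M.IsRep (ZMod 2) v) (hw : M.IsRep (ZMod 2) w) :
    ∃ A : V ≃ₗ[ZMod 2] V, ⇑A ∘ v = w := by
  classical
  obtain ⟨B, hB⟩ := M.exists_isBasis' univ
  lift B to Finset α using B.toFinite
  have hvB : LinearIndepOn (ZMod 2) v B := (hv B).1 hB.indep
  have hwB : LinearIndepOn (ZMod 2) w B := (hw B).1 hB.indep
  obtain ⟨A, hA⟩ := exists_linearEquiv_apply_eq_of_linearIndependent hvB hwB
  have hspan : ∀ {u : α → V}, M.IsRep (ZMod 2) u → ∀ x, u x ∈ span (ZMod 2) (u '' B) :=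
    fun hu x ↦ (hu.mem_span_image_iff hB.indep).2 fun hins ↦
      by_contra fun hxB ↦ hB.insert_not_indep ⟨mem_univ x, hxB⟩ hins
  refine ⟨A, funext fun x ↦ ?_⟩
  rw [Function.comp_apply, hvB.eq_sum_filter_notMem_span (hspan hv x),
    hwB.eq_sum_filter_notMem_span (hspan hw x), map_sum]
  refine Finset.sum_congr (Finset.filter_congr fun b _ ↦ ?_) fun b hb ↦
    hA ⟨b, (Finset.mem_filter.1 hb).1⟩
  have hBb : M.Indep (B.erase b) := hB.indep.subset (Finset.coe_subset.2 (B.erase_subset b))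
  rw [hv.mem_span_image_iff hBb, hw.mem_span_image_iff hBb]

theorem _root_.RepOver.exists_isRep [Fintype α] [FiniteDimensional K W] (h : RepOver K M)
    (hE : M.E = univ) (hcard : Fintype.card α ≤ Module.finrank K W) :
    ∃ v : α → W, M.IsRep K v := by
  obtain ⟨ι, f, hf⟩ := h
  have hfrep : M.IsRep K f := fun I ↦ by simp [hf, hE, LinearIndepOn]
  set U := span K (range f)
  have := FiniteDimensional.span_of_finite K (finite_range f)
  let f' : α → U := fun x ↦ ⟨f x, subset_span (mem_range_self x)⟩
  have hf' : M.IsRep K f' := (isRep_comp_iff U.subtype U.injective_subtype).1 hfrep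
  obtain ⟨φ, hφ⟩ := finrank_le_iff_exists_linearMap.1 ((finrank_range_le_card f).trans hcard)
  exact ⟨φ ∘ f', (isRep_comp_iff φ hφ).2 hf'⟩

end Matroid

section UniformWeight

open scoped Finset

variable {β γ : Type*} [DecidableEq β]

noncomputable def uniformWeight (s : Finset β) (b : β) : ℝ :=
  if b ∈ s then (#s : ℝ)⁻¹ else 0

theorem uniformWeight_nonneg (s : Finset β) (b : β) : 0 ≤ uniformWeight s b := by
  unfold uniformWeight; split_ifs <;> positivity

theorem mem_of_uniformWeight_pos {s : Finset β} {b : β} (h : 0 < uniformWeight s b) : b ∈ s := by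
  by_contra hb
  simp [uniformWeight, hb] at h

theorem sum_uniformWeight [Fintype β] {s : Finset β} (hs : s.Nonempty) :
    ∑ b, uniformWeight s b = 1 := by
  simp only [uniformWeight]
  rw [Finset.sum_ite_mem, Finset.univ_inter, Finset.sum_const, nsmul_eq_mul,
    mul_inv_cancel₀ (by exact_mod_cast hs.card_ne_zero)]

theorem uniformWeight_equiv_apply [DecidableEq γ] (e : β ≃ γ) {s : Finset γ} {t : Finset β}
    (h : ∀ b, e b ∈ s ↔ b ∈ t) (b : β) : uniformWeight s (e b) = uniformWeight t b := by
  have hst : s = t.map e.toEmbedding := by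
    ext c
    rw [Finset.mem_map_equiv, ← h, e.apply_symm_apply]
  simp only [uniformWeight, hst, Finset.card_map, Finset.mem_map_equiv, e.symm_apply_apply]

theorem sum_uniformWeight_fiber [Fintype β] [DecidableEq γ] {s : Finset β} {t : Finset γ}
    {p : β → γ} (hs : s.Nonempty) (hst : ∀ b ∈ s, p b ∈ t)
    (hfiber : ∀ c ∈ t, ∀ c' ∈ t, #{b ∈ s | p b = c} = #{b ∈ s | p b = c'}) (c : γ) :
    ∑ b with p b = c, uniformWeight s b = uniformWeight t c := by
  have hsum : ∑ b with p b = c, uniformWeight s b = #{b ∈ s | p b = c} * (#s : ℝ)⁻¹ := by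
    simp only [uniformWeight]
    rw [Finset.sum_ite_mem, Finset.sum_const, nsmul_eq_mul, Finset.filter_inter,
      Finset.univ_inter]
  rw [hsum, uniformWeight]
  split_ifs with hc
  · have hcard : #s = #t * #{b ∈ s | p b = c} := by
      rw [Finset.card_eq_sum_card_fiberwise hst,
        Finset.sum_congr rfl fun c' hc' ↦ hfiber c' hc' c hc, Finset.sum_const, smul_eq_mul]
    have hs0 : (#s : ℝ) ≠ 0 := by exact_mod_cast hs.card_ne_zero
    rw [hcard, Nat.cast_mul] at hs0 ⊢
    field_simp [right_ne_zero_of_mul hs0]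
  · rw [Finset.filter_false_of_mem fun b hb (hpb : p b = c) ↦ hc (hpb ▸ hst b hb)]
    simp

end UniformWeight

section BinaryRepresentations

open scoped Finset

variable {α β : Type*} [Fintype α] [DecidableEq α] {n : ℕ} {M : Matroid α}

open Classical in
noncomputable def binaryReps (n : ℕ) (M : Matroid α) : Finset (α → Fin n → ZMod 2) :=
  {g | M.IsRep (ZMod 2) g}

theorem mem_binaryReps {g : α → Fin n → ZMod 2} : g ∈ binaryReps n M ↔ M.IsRep (ZMod 2) g := by
  simp [binaryReps]

theorem binaryReps_nonempty (hn : Fintype.card α ≤ n) (hE : M.E = univ)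
    (hM : RepOver (ZMod 2) M) : (binaryReps n M).Nonempty := by
  obtain ⟨g, hg⟩ := hM.exists_isRep hE (W := Fin n → ZMod 2) (by simpa using hn)
  exact ⟨g, mem_binaryReps.2 hg⟩

theorem card_filter_comp_binaryReps_eq [Fintype β] [DecidableEq β] (f : β → α)
    {g₁ g₂ : β → Fin n → ZMod 2} (h₁ : g₁ ∈ binaryReps n (M.comap f))
    (h₂ : g₂ ∈ binaryReps n (M.comap f)) :
    #{g ∈ binaryReps n M | g ∘ f = g₁} = #{g ∈ binaryReps n M | g ∘ f = g₂} := by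
  obtain ⟨A, hA⟩ := (mem_binaryReps.1 h₁).exists_linearEquiv_comp_eq (mem_binaryReps.1 h₂)
  have hA' : ⇑A.symm ∘ g₂ = g₁ := by
    rw [← hA]
    funext x
    simp
  refine Finset.card_nbij' (⇑A ∘ ·) (⇑A.symm ∘ ·) ?_ ?_ ?_ ?_
  · intro g hg
    simp only [Finset.coe_filter, mem_ofPred_eq, mem_binaryReps] at hg ⊢
    exact ⟨(Matroid.isRep_comp_iff A.toLinearMap A.injective).2 hg.1, by
      rw [Function.comp_assoc, hg.2, hA]⟩
  · intro g hg
    simp only [Finset.coe_filter, mem_ofPred_eq, mem_binaryReps] at hg ⊢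
    exact ⟨(Matroid.isRep_comp_iff A.symm.toLinearMap A.symm.injective).2 hg.1, by
      rw [Function.comp_assoc, hg.2, hA']⟩
  · intro g _
    funext x
    simp
  · intro g _
    funext x
    simp

end BinaryRepresentations

/-- There is an order-independent randomized online matroid morphism from the class of binary
matroids with at most `n` elements into the complete binary matroid of rank `n`.  Each binary
matroid `M` on `Fin m` (`m ≤ n`) is assigned a probability distribution `μ M` on maps
`Fin m → 𝔽₂ⁿ` such that: (i) every map in the support is rank-preserving; (ii) the
pushforward of `μ M` under restriction to a prefix is the distribution assigned to the
prefix; (iii) for every permutation `σ` of `Fin m`, the pushforward of `μ (Mᵒσ)` under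
`f ↦ f ∘ σ⁻¹` equals `μ M`, where `Mᵒσ = M.comap σ` is the matroid in which `S` is
independent iff `σ(S)` is independent in `M`. -/
theorem stmt4 (n : ℕ) :
    ∃ μ : (m : ℕ) → Matroid (Fin m) → ((Fin m → (Fin n → ZMod 2)) → ℝ),
      (∀ m, m ≤ n → ∀ M : Matroid (Fin m), M.E = univ → RepOver (ZMod 2) M →
        ((∀ g, 0 ≤ μ m M g) ∧ (∑ g : Fin m → (Fin n → ZMod 2), μ m M g) = 1 ∧
          (∀ g : Fin m → (Fin n → ZMod 2), 0 < μ m M g →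
            ∀ S : Set (Fin m), (spanRank (ZMod 2) (g '' S) : ℕ∞) = mRank M S))) ∧
      (∀ k m (hkm : k ≤ m), m ≤ n → ∀ M : Matroid (Fin m), M.E = univ →
        RepOver (ZMod 2) M → ∀ g' : Fin k → (Fin n → ZMod 2),
          μ k (prefixMatroid hkm M) g' =
            ∑ g ∈ Finset.univ.filter
              (fun g : Fin m → (Fin n → ZMod 2) => g ∘ Fin.castLE hkm = g'), μ m M g) ∧
      (∀ m, m ≤ n → ∀ M : Matroid (Fin m), M.E = univ → RepOver (ZMod 2) M →
        ∀ σ : Equiv.Perm (Fin m), ∀ g : Fin m → (Fin n → ZMod 2),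
          μ m (M.comap σ) (g ∘ σ) = μ m M g) := by
  refine ⟨fun m M ↦ uniformWeight (binaryReps n M), ?_, ?_, ?_⟩
  · intro m hmn M hE hM
    refine ⟨uniformWeight_nonneg _,
      sum_uniformWeight (binaryReps_nonempty (by simpa using hmn) hE hM), fun g hg S ↦ ?_⟩
    rw [mRank_eq_eRk, ← (mem_binaryReps.1 (mem_of_uniformWeight_pos hg)).finrank_span_image_eq_eRk
      S.toFinite]
    rfl
  · intro k m hkm hmn M hE hM g'
    exact (sum_uniformWeight_fiber (binaryReps_nonempty (by simpa using hmn) hE hM)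
      (fun g hg ↦ mem_binaryReps.2 ((mem_binaryReps.1 hg).comap _))
      (fun _ h₁ _ h₂ ↦ card_filter_comp_binaryReps_eq _ h₁ h₂) g').symm
  · intro m _ M _ _ σ g
    exact uniformWeight_equiv_apply (σ.symm.arrowCongr (.refl _))
      (fun g ↦ by rw [mem_binaryReps, mem_binaryReps]; exact Matroid.isRep_comap_equiv_iff σ) g
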